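/- arXiv:2106.09445 — 3 statements merged into one kernel-verified Lean document; each statement's English description precedes it below -/
import Mathlib

section
/- Let σ : ℝ → ℝ be convex and monotone nondecreasing. Fix an input dimension n, a depth M, and layer widths d_1, …, d_M. For k = 1, …, M let W^x_k be a real d_k × n matrix, b_k ∈ ℝ^{d_k}, and for k = 2, …, M let W^z_k be a real d_k × d_{k−1} matrix all of whose entries are nonnegative. Define layer maps z^1(x) = σ applied componentwise to W^x_1 x + b_1, and z^k(x) = σ applied componentwise to W^z_k z^{k−1}(x) + W^x_k x + b_k for k = 2, …, M. Then for every k and every component index j, the function x ↦ z^k_j(x) is convex on ℝ^n. In particular, every componentwise-nonnegative linear combination of the outputs of the last layer is a convex function of the input x. -/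
private lemma comp_convex {σ : ℝ → ℝ} (hσ : ConvexOn ℝ Set.univ σ) (hm : Monotone σ)
    {E : Type*} [AddCommMonoid E] [Module ℝ E] {f : E → ℝ}
    (hf : ConvexOn ℝ Set.univ f) : ConvexOn ℝ Set.univ (fun x => σ (f x)) := by
  refine ⟨convex_univ, fun x _ y _ s t hs ht hst => ?_⟩
  calc σ (f (s • x + t • y)) ≤ σ (s * f x + t * f y) := by
        have := hf.2 (Set.mem_univ x) (Set.mem_univ y) hs ht hst
        exact hm (by simpa using this)
    _ ≤ s • σ (f x) + t • σ (f y) := by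
        simpa using hσ.2 (Set.mem_univ (f x)) (Set.mem_univ (f y)) hs ht hst

private lemma affine_convex {n : ℕ} (a : ℕ → ℝ) (c : ℝ) :
    ConvexOn ℝ Set.univ (fun x : Fin n → ℝ => ∑ i : Fin n, a i * x i + c) := by
  refine ⟨convex_univ, fun x _ y _ s t hs ht hst => le_of_eq ?_⟩
  simp only [Pi.add_apply, Pi.smul_apply, smul_eq_mul]
  rw [Finset.sum_congr rfl (fun i _ => by ring :
    ∀ i ∈ (Finset.univ : Finset (Fin n)), a (i : ℕ) * (s * x i + t * y i) = s * (a (i:ℕ) * x i) + t * (a (i:ℕ) * y i))]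
  rw [Finset.sum_add_distrib, ← Finset.mul_sum, ← Finset.mul_sum]
  linear_combination (-c) * hst

private lemma sum_convex {E : Type*} [AddCommMonoid E] [Module ℝ E] {ι : Type*}
    (s : Finset ι) (f : ι → E → ℝ) (h : ∀ i ∈ s, ConvexOn ℝ Set.univ (f i)) :
    ConvexOn ℝ Set.univ (fun x => ∑ i ∈ s, f i x) := by
  induction s using Finset.cons_induction with
  | empty => simpa using convexOn_const 0 convex_univ
  | cons a s ha ih =>
      simp only [Finset.sum_cons]
      exact (h a (Finset.mem_cons_self a s)).add
        (ih fun i hi => h i (Finset.mem_cons_of_mem hi))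

/-- Input convexity of input convex neural networks (ICNN):
if `σ : ℝ → ℝ` is convex and monotone nondecreasing, the layer maps
`z¹(x) = σ.(Wˣ₁ x + b₁)` and `zᵏ(x) = σ.(Wᶻₖ zᵏ⁻¹(x) + Wˣₖ x + bₖ)` for `k ≥ 2`,
with all entries of the matrices `Wᶻₖ` nonnegative, are componentwise convex
functions of the input `x ∈ ℝⁿ`.  In particular, any componentwise-nonnegative
linear combination of the outputs of the last layer is convex in `x`. -/
theorem icnn_layers_convex
    (σ : ℝ → ℝ) (hσ_conv : ConvexOn ℝ Set.univ σ) (hσ_mono : Monotone σ)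
    (n M : ℕ) (hM : 1 ≤ M) (d : ℕ → ℕ)
    (Wx : ℕ → ℕ → ℕ → ℝ) (Wz : ℕ → ℕ → ℕ → ℝ) (b : ℕ → ℕ → ℝ)
    (hWz_nonneg : ∀ k, 2 ≤ k → ∀ j i, 0 ≤ Wz k j i)
    (z : ℕ → (Fin n → ℝ) → ℕ → ℝ)
    (hz1 : ∀ x j, z 1 x j = σ (∑ i : Fin n, Wx 1 j (i : ℕ) * x i + b 1 j))
    (hzk : ∀ k, 2 ≤ k → ∀ x j,
      z k x j = σ (∑ i ∈ Finset.range (d (k - 1)), Wz k j i * z (k - 1) x i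
        + ∑ i : Fin n, Wx k j (i : ℕ) * x i + b k j)) :
    (∀ k, 1 ≤ k → k ≤ M → ∀ j, j < d k →
      ConvexOn ℝ Set.univ (fun x : Fin n → ℝ => z k x j)) ∧
    (∀ c : ℕ → ℝ, (∀ j, 0 ≤ c j) →
      ConvexOn ℝ Set.univ
        (fun x : Fin n → ℝ => ∑ j ∈ Finset.range (d M), c j * z M x j)) := by
  have key : ∀ k, 1 ≤ k → ∀ j, ConvexOn ℝ Set.univ (fun x : Fin n → ℝ => z k x j) := by
    intro k hk
    induction k, hk using Nat.le_induction with
    | base =>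
        intro j
        simp only [hz1]
        exact comp_convex hσ_conv hσ_mono (affine_convex _ _)
    | succ k hk ih =>
        intro j
        have h2 : 2 ≤ k + 1 := by omega
        simp only [hzk (k + 1) h2, Nat.add_sub_cancel]
        refine comp_convex hσ_conv hσ_mono ?_
        have e : (fun x : Fin n → ℝ =>
            ∑ i ∈ Finset.range (d k), Wz (k + 1) j i * z k x i
              + ∑ i : Fin n, Wx (k + 1) j (i : ℕ) * x i + b (k + 1) j)
          = fun x => (∑ i ∈ Finset.range (d k), Wz (k + 1) j i * z k x i)
              + (∑ i : Fin n, Wx (k + 1) j (i : ℕ) * x i + b (k + 1) j) := by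
          funext x; ring
        rw [e]
        refine ConvexOn.add ?_ (affine_convex _ _)
        refine sum_convex _ _ fun i _ => ?_
        simpa [smul_eq_mul] using (ih i).smul (hWz_nonneg (k + 1) h2 j i)
  refine ⟨fun k hk _ j _ => key k hk j, fun c hc => ?_⟩
  refine sum_convex _ _ fun j _ => ?_
  simpa [smul_eq_mul] using (key M hM j).smul (hc j)
end

section
/- Let m : [−1,1] → ℝ^{N+1} be continuous, α ∈ ℝ^{N+1}, and set f(v) = exp(α·m(v)). Let g : [−1,1] → ℝ be measurable with g ≥ 0 almost everywhere, with g and g·log g Lebesgue integrable (convention 0·log 0 = 0), and with ∫_{−1}^{1} m_i g dv = ∫_{−1}^{1} m_i f dv for all i. If ∫_{−1}^{1} (g log g − g) dv = ∫_{−1}^{1} (f log f − f) dv, then g = f almost everywhere on [−1,1]. That is, the entropy-minimizing density with prescribed moments is unique almost everywhere. -/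
open MeasureTheory

lemma gibbs_nonneg (a c : ℝ) (ha : 0 ≤ a) :
    0 ≤ a * Real.log a - a - c * a + Real.exp c := by
  rcases ha.eq_or_lt with h | h
  · rw [← h]
    simp [(Real.exp_pos c).le]
  · have hb : (0:ℝ) < Real.exp c := Real.exp_pos c
    have hlog : Real.log (Real.exp c / a) ≤ Real.exp c / a - 1 :=
      Real.log_le_sub_one_of_pos (by positivity)
    have heq : Real.log (Real.exp c / a) = c - Real.log a := by
      rw [Real.log_div (by positivity) (ne_of_gt h), Real.log_exp]
    rw [heq] at hlog
    have h1 : a * (c - Real.log a) ≤ a * (Real.exp c / a - 1) :=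
      mul_le_mul_of_nonneg_left hlog h.le
    have h2 : a * (Real.exp c / a - 1) = Real.exp c - a := by
      field_simp
    rw [h2] at h1
    nlinarith [h1]

lemma gibbs_eq (a c : ℝ) (ha : 0 ≤ a)
    (h0 : a * Real.log a - a - c * a + Real.exp c = 0) : a = Real.exp c := by
  rcases ha.eq_or_lt with h | h
  · exfalso
    rw [← h] at h0
    simp at h0
  · by_contra hne
    have hb : (0:ℝ) < Real.exp c := Real.exp_pos c
    have hx : Real.exp c / a ≠ 1 := by
      intro hx1
      apply hne
      field_simp at hx1
      linarith
    have hlog : Real.log (Real.exp c / a) < Real.exp c / a - 1 :=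
      Real.log_lt_sub_one_of_pos (by positivity) hx
    have heq : Real.log (Real.exp c / a) = c - Real.log a := by
      rw [Real.log_div (by positivity) (ne_of_gt h), Real.log_exp]
    rw [heq] at hlog
    have h1 : a * (c - Real.log a) < a * (Real.exp c / a - 1) :=
      mul_lt_mul_of_pos_left hlog h
    have h2 : a * (Real.exp c / a - 1) = Real.exp c - a := by
      field_simp
    rw [h2] at h1
    nlinarith [h1]

/-- Uniqueness of the minimal-entropy density with prescribed moments: if a
nonnegative density `g` on `[-1,1]` has the same moments as `f = exp(α·m)` and
also the same Maxwell–Boltzmann entropy, then `g = f` almost everywhere. -/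
theorem exp_family_entropy_minimizer_unique (N : ℕ) (m : ℝ → Fin (N + 1) → ℝ)
    (hm : ∀ i, ContinuousOn (fun v => m v i) (Set.Icc (-1 : ℝ) 1))
    (α : Fin (N + 1) → ℝ) (f : ℝ → ℝ)
    (hf : f = fun v => Real.exp (∑ i, α i * m v i))
    (g : ℝ → ℝ) (hg_meas : Measurable g)
    (hg_nonneg : ∀ᵐ v ∂(volume.restrict (Set.Icc (-1 : ℝ) 1)), 0 ≤ g v)
    (hg_int : IntegrableOn g (Set.Icc (-1 : ℝ) 1))
    (hglogg_int : IntegrableOn (fun v => g v * Real.log (g v)) (Set.Icc (-1 : ℝ) 1))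
    (hmom : ∀ i, ∫ v in Set.Icc (-1 : ℝ) 1, m v i * g v
      = ∫ v in Set.Icc (-1 : ℝ) 1, m v i * f v)
    (hent : ∫ v in Set.Icc (-1 : ℝ) 1, (g v * Real.log (g v) - g v)
      = ∫ v in Set.Icc (-1 : ℝ) 1, (f v * Real.log (f v) - f v)) :
    ∀ᵐ v ∂(volume.restrict (Set.Icc (-1 : ℝ) 1)), g v = f v := by
  set s : Set ℝ := Set.Icc (-1 : ℝ) 1 with hs_def
  have hs : MeasurableSet s := measurableSet_Icc
  have hcomp : IsCompact s := isCompact_Icc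
  set L : ℝ → ℝ := fun v => ∑ i, α i * m v i with hL_def
  have hL_cont : ContinuousOn L s := by
    apply continuousOn_finset_sum
    intro i _
    exact (hm i).const_smul (α i)
  have hf_cont : ContinuousOn f s := by
    rw [hf]
    exact Real.continuous_exp.comp_continuousOn hL_cont
  -- integrabilities
  have hf_int : IntegrableOn f s := hf_cont.integrableOn_Icc
  have hmi_aesm : ∀ i, AEStronglyMeasurable (fun v => m v i)
      (volume.restrict s) := fun i => (hm i).aestronglyMeasurable hs
  have hL_aesm : AEStronglyMeasurable L (volume.restrict s) :=
    hL_cont.aestronglyMeasurable hs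
  have hmi_bdd : ∀ i, ∃ C, ∀ x ∈ s, ‖m x i‖ ≤ C := fun i =>
    hcomp.exists_bound_of_continuousOn (hm i)
  have hmig_int : ∀ i, IntegrableOn (fun v => m v i * g v) s := by
    intro i
    obtain ⟨C, hC⟩ := hmi_bdd i
    exact hg_int.bdd_mul (hmi_aesm i)
      ((ae_restrict_iff' hs).2 (Filter.Eventually.of_forall hC))
  have hmif_int : ∀ i, IntegrableOn (fun v => m v i * f v) s := by
    intro i
    exact ((hm i).mul hf_cont).integrableOn_Icc
  have hLg_int : IntegrableOn (fun v => L v * g v) s := by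
    obtain ⟨C, hC⟩ := hcomp.exists_bound_of_continuousOn hL_cont
    exact hg_int.bdd_mul hL_aesm
      ((ae_restrict_iff' hs).2 (Filter.Eventually.of_forall hC))
  have hLf_int : IntegrableOn (fun v => L v * f v) s :=
    (hL_cont.mul hf_cont).integrableOn_Icc
  -- moment identity for L
  have hLmom : ∫ v in s, L v * g v = ∫ v in s, L v * f v := by
    have e1 : ∀ (h : ℝ → ℝ), ∫ v in s, L v * h v
        = ∫ v in s, ∑ i, α i * (m v i * h v) := by
      intro h
      congr 1 with v
      rw [hL_def]
      rw [Finset.sum_mul]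
      congr 1 with i
      ring
    rw [e1 g, e1 f,
      integral_finset_sum _ (fun i _ => ((hmig_int i).const_mul (α i))),
      integral_finset_sum _ (fun i _ => ((hmif_int i).const_mul (α i)))]
    congr 1 with i
    rw [integral_const_mul, integral_const_mul, hmom i]
  -- rewrite entropy of f
  have hfe : ∀ v, f v * Real.log (f v) - f v = L v * f v - f v := by
    intro v
    rw [hf]
    simp [Real.log_exp]
    ring
  have hent' : ∫ v in s, (g v * Real.log (g v) - g v)
      = (∫ v in s, L v * g v) - ∫ v in s, f v := by
    rw [hent]
    rw [show (fun v => f v * Real.log (f v) - f v) = fun v => L v * f v - f v from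
      funext hfe]
    rw [integral_sub hLf_int hf_int, hLmom]
  -- the nonnegative function φ
  set φ : ℝ → ℝ := fun v => g v * Real.log (g v) - g v - L v * g v + f v with hφ_def
  have hB : IntegrableOn (fun v => g v * Real.log (g v) - g v) s :=
    hglogg_int.sub hg_int
  have hA : IntegrableOn (fun v => g v * Real.log (g v) - g v - L v * g v) s :=
    hB.sub hLg_int
  have hφ_int : Integrable φ (volume.restrict s) := hA.add hf_int
  have hφ_nonneg : 0 ≤ᵐ[volume.restrict s] φ := by
    filter_upwards [hg_nonneg] with v hv
    have := gibbs_nonneg (g v) (L v) hv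
    have hfv : f v = Real.exp (L v) := by rw [hf]
    simp only [hφ_def, Pi.zero_apply, hfv]
    linarith
  have hφ_zero : ∫ v in s, φ v = 0 := by
    have : ∫ v in s, φ v = (∫ v in s, (g v * Real.log (g v) - g v))
        - (∫ v in s, L v * g v) + ∫ v in s, f v := by
      simp only [hφ_def]
      rw [integral_add hA hf_int,
        integral_sub hB hLg_int,
        integral_sub hglogg_int hg_int]
    rw [this, hent']
    ring
  have hφ_ae : φ =ᵐ[volume.restrict s] 0 :=
    (integral_eq_zero_iff_of_nonneg_ae hφ_nonneg hφ_int).1 hφ_zero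
  filter_upwards [hφ_ae, hg_nonneg] with v hv0 hvnn
  have hfv : f v = Real.exp (L v) := by rw [hf]
  rw [hfv]
  apply gibbs_eq (g v) (L v) hvnn
  have : φ v = 0 := hv0
  simp only [hφ_def, hfv] at this
  linarith
end

section
/- Let g : [−1,1] → ℝ be measurable, nonnegative almost everywhere, integrable, with ∫_{−1}^{1} g(v) dv = 1, and suppose v ↦ v^k g(v) is integrable for k = 1, 2, 3. Define ū_k = ∫_{−1}^{1} v^k g(v) dv. If −1 < ū_1 < 1, then −ū_2 + (ū_1 + ū_2)²/(1 + ū_1) ≤ ū_3 ≤ ū_2 − (ū_1 − ū_2)²/(1 − ū_1) (the order-three Kershaw realizability conditions are necessary). -/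
open MeasureTheory

/-- If a quadratic `a t² + b t + c` is nonnegative for all `t` and `a > 0`,
then its discriminant is nonpositive. -/
lemma quad_aux (a b c : ℝ) (ha : 0 < a) (h : ∀ t : ℝ, 0 ≤ a * t ^ 2 + b * t + c) :
    b ^ 2 ≤ 4 * a * c := by
  have h' := h (-b / (2 * a))
  have e : a * (-b / (2 * a)) ^ 2 + b * (-b / (2 * a)) + c = c - b ^ 2 / (4 * a) := by
    field_simp; ring
  rw [e, sub_nonneg, div_le_iff₀ (by positivity)] at h'
  nlinarith [h']

/-- Necessity of the order-three Kershaw realizability conditions: for any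
nonnegative density `g` on `[-1,1]` with unit mass and normalized moments
`ūₖ = ∫ vᵏ g dv`, if `-1 < ū₁ < 1` then
`-ū₂ + (ū₁ + ū₂)²/(1 + ū₁) ≤ ū₃ ≤ ū₂ − (ū₁ − ū₂)²/(1 − ū₁)`. -/
theorem kershaw_order_three_necessary (g : ℝ → ℝ) (hg_meas : Measurable g)
    (hg_nonneg : ∀ᵐ v ∂(volume.restrict (Set.Icc (-1 : ℝ) 1)), 0 ≤ g v)
    (hg_int : IntegrableOn g (Set.Icc (-1 : ℝ) 1))
    (hg_mass : (∫ v in Set.Icc (-1 : ℝ) 1, g v) = 1)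
    (hgk_int : ∀ k : ℕ, 1 ≤ k → k ≤ 3 →
      IntegrableOn (fun v => v ^ k * g v) (Set.Icc (-1 : ℝ) 1))
    (u1 u2 u3 : ℝ)
    (hu1 : u1 = ∫ v in Set.Icc (-1 : ℝ) 1, v ^ 1 * g v)
    (hu2 : u2 = ∫ v in Set.Icc (-1 : ℝ) 1, v ^ 2 * g v)
    (hu3 : u3 = ∫ v in Set.Icc (-1 : ℝ) 1, v ^ 3 * g v)
    (h1 : -1 < u1) (h2 : u1 < 1) :
    -u2 + (u1 + u2) ^ 2 / (1 + u1) ≤ u3 ∧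
    u3 ≤ u2 - (u1 - u2) ^ 2 / (1 - u1) := by
  have hI1 := hgk_int 1 (by norm_num) (by norm_num)
  have hI2 := hgk_int 2 (by norm_num) (by norm_num)
  have hI3 := hgk_int 3 (by norm_num) (by norm_num)
  have key : ∀ s : ℝ, s = 1 ∨ s = -1 → ∀ t : ℝ,
      0 ≤ s * u3 + (1 - 2 * t * s) * u2 + (t ^ 2 * s - 2 * t) * u1 + t ^ 2 := by
    intro s hs t
    have hpt : ∀ v : ℝ, (v - t) ^ 2 * (1 + s * v) * g v
        = s * (v ^ 3 * g v) + (1 - 2 * t * s) * (v ^ 2 * g v)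
          + (t ^ 2 * s - 2 * t) * (v ^ 1 * g v) + t ^ 2 * g v := by
      intro v; ring
    have hnn : 0 ≤ ∫ v in Set.Icc (-1 : ℝ) 1, (v - t) ^ 2 * (1 + s * v) * g v := by
      apply integral_nonneg_of_ae
      filter_upwards [hg_nonneg, ae_restrict_mem measurableSet_Icc] with v hv hvmem
      have hsv : 0 ≤ 1 + s * v := by
        rcases hs with rfl | rfl
        · have := hvmem.1; linarith
        · have := hvmem.2; linarith
      have := sq_nonneg (v - t)
      positivity
    have hA3 : IntegrableOn (fun v => s * (v ^ 3 * g v)) (Set.Icc (-1 : ℝ) 1) :=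
      hI3.const_mul s
    have hA32 : IntegrableOn
        (fun v => s * (v ^ 3 * g v) + (1 - 2 * t * s) * (v ^ 2 * g v))
        (Set.Icc (-1 : ℝ) 1) := by
      exact hA3.add (hI2.const_mul _)
    have hA321 : IntegrableOn
        (fun v => s * (v ^ 3 * g v) + (1 - 2 * t * s) * (v ^ 2 * g v)
          + (t ^ 2 * s - 2 * t) * (v ^ 1 * g v)) (Set.Icc (-1 : ℝ) 1) := by
      exact hA32.add (hI1.const_mul _)
    have heq : (∫ v in Set.Icc (-1 : ℝ) 1, (v - t) ^ 2 * (1 + s * v) * g v)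
        = s * u3 + (1 - 2 * t * s) * u2 + (t ^ 2 * s - 2 * t) * u1 + t ^ 2 := by
      simp_rw [hpt]
      rw [integral_add hA321 (hg_int.const_mul _),
          integral_add hA32 (hI1.const_mul _),
          integral_add hA3 (hI2.const_mul _),
          integral_const_mul, integral_const_mul, integral_const_mul, integral_const_mul,
          hg_mass, ← hu1, ← hu2, ← hu3]
      ring
    linarith [heq ▸ hnn]
  have hd1 : (0:ℝ) < 1 + u1 := by linarith
  have hd2 : (0:ℝ) < 1 - u1 := by linarith
  constructor
  · have hq := quad_aux (1 + u1) (-2 * (u1 + u2)) (u2 + u3) hd1 (by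
      intro t
      have := key 1 (Or.inl rfl) t
      nlinarith [this])
    have hle : (u1 + u2) ^ 2 / (1 + u1) ≤ u2 + u3 := by
      rw [div_le_iff₀ hd1]; nlinarith [hq]
    linarith
  · have hq := quad_aux (1 - u1) (-2 * (u1 - u2)) (u2 - u3) hd2 (by
      intro t
      have := key (-1) (Or.inr rfl) t
      nlinarith [this])
    have hle : (u1 - u2) ^ 2 / (1 - u1) ≤ u2 - u3 := by
      rw [div_le_iff₀ hd2]; nlinarith [hq]
    linarith
end
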